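/- arXiv:2211.10350 — 5 statements merged into one kernel-verified Lean document; each statement's English description precedes it below -/
import Mathlib

section
/- For every integer d ≥ 2, every integer n ≥ 1 and every unit vector ψ ∈ ℂ^{d^n}, the magic satisfies M(ψ)² · (Σ_a |tr(P_a · ψψ†)|⁴) ≥ dⁿ, where the sum ranges over all d^{2n} Pauli strings a; equivalently, M(ψ) ≥ d^{n/2} / (Σ_a |tr(P_a · ψψ†)|⁴)^{1/2}. -/
/-!
The Weyl–Heisenberg operators `X^l Z^m` are orthogonal for the Hilbert–Schmidt inner product,
since the shifts separate the off-diagonals and the characters `m ↦ ζ^(m k)` of `ZMod d` are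
orthogonal; tensoring, `∑_a P_a(f, g) conj P_a(f', g') = d^n δ_{(f,g),(f',g')}`. Parseval then gives
`∑_a |tr(P_a ψψ†)|² = d^n` for a unit vector `ψ`. For `t ≥ 0`, two Cauchy–Schwarz steps
`(∑ t²)² ≤ ∑ t · ∑ t³` and `(∑ t³)² ≤ ∑ t² · ∑ t⁴` yield the Hölder interpolation
`(∑ t²)³ ≤ (∑ t)² ∑ t⁴`, which with `∑ t² = d^n` reads `M(ψ)² ∑ t⁴ ≥ d^{3n} / d^{2n}`.
-/

/-- `ζ = exp(2πi/d)`, a primitive `d`-th root of unity. -/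
noncomputable def zeta (d : ℕ) : ℂ := Complex.exp (2 * Real.pi * Complex.I / d)

/-- The qudit shift matrix `X`: `X j k = 1` if `j = k + 1`, else `0`. -/
def pauliX (d : ℕ) : Matrix (ZMod d) (ZMod d) ℂ :=
  Matrix.of fun j k => if j = k + 1 then 1 else 0

/-- The qudit clock matrix `Z`: diagonal with `Z j j = ζ^j`. -/
noncomputable def pauliZ (d : ℕ) : Matrix (ZMod d) (ZMod d) ℂ :=
  Matrix.of fun j k => if j = k then zeta d ^ j.val else 0

/-- The Pauli string `P_a = ⊗_{i=1}^n X^{l_i} Z^{m_i}` associated to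
`a = ((l₁,m₁),…,(lₙ,mₙ))`, realized as a Kronecker product: a `d^n × d^n`
matrix with rows and columns indexed by functions `Fin n → ZMod d`. -/
noncomputable def pauliString (d n : ℕ) [NeZero d] (a : Fin n → ZMod d × ZMod d) :
    Matrix (Fin n → ZMod d) (Fin n → ZMod d) ℂ :=
  Matrix.of fun f g =>
    ∏ i, (pauliX d ^ ((a i).1.val) * pauliZ d ^ ((a i).2.val)) (f i) (g i)

/-- The rank-one outer product `ψψ†`. -/
def outerProd {ι : Type*} (ψ : ι → ℂ) : Matrix ι ι ℂ :=
  Matrix.of fun f g => ψ f * star (ψ g)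

open Finset Matrix ComplexConjugate

theorem Finset.sum_sq_pow_three_le_sq_sum_mul_sum_pow_four {ι R : Type*} [Field R] [LinearOrder R]
    [IsStrictOrderedRing R] (s : Finset ι) {f : ι → R} (hf : ∀ i ∈ s, 0 ≤ f i) :
    (∑ i ∈ s, f i ^ 2) ^ 3 ≤ (∑ i ∈ s, f i) ^ 2 * ∑ i ∈ s, f i ^ 4 := by
  set S₁ := ∑ i ∈ s, f i
  set S₂ := ∑ i ∈ s, f i ^ 2
  set S₄ := ∑ i ∈ s, f i ^ 4
  have hS₂ : 0 ≤ S₂ := sum_nonneg fun i _ => sq_nonneg (f i)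
  have hS₄ : 0 ≤ S₄ := sum_nonneg fun i hi => pow_nonneg (hf i hi) 4
  have h13 : S₂ ^ 2 ≤ S₁ * ∑ i ∈ s, f i ^ 3 :=
    sum_sq_le_sum_mul_sum_of_sq_le_mul s hf (fun i hi => pow_nonneg (hf i hi) 3)
      fun i _ => le_of_eq (by ring)
  have h24 : (∑ i ∈ s, f i ^ 3) ^ 2 ≤ S₂ * S₄ :=
    sum_sq_le_sum_mul_sum_of_sq_le_mul s (fun i _ => sq_nonneg (f i))
      (fun i hi => pow_nonneg (hf i hi) 4) fun i _ => le_of_eq (by ring)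
  rcases hS₂.eq_or_lt with h0 | hpos
  · rw [← h0, zero_pow three_ne_zero]
    exact mul_nonneg (sq_nonneg _) hS₄
  refine le_of_mul_le_mul_left ?_ hpos
  calc S₂ * S₂ ^ 3 = (S₂ ^ 2) ^ 2 := by ring
    _ ≤ (S₁ * ∑ i ∈ s, f i ^ 3) ^ 2 := pow_le_pow_left₀ (sq_nonneg _) h13 2
    _ = S₁ ^ 2 * (∑ i ∈ s, f i ^ 3) ^ 2 := mul_pow _ _ 2
    _ ≤ S₁ ^ 2 * (S₂ * S₄) := by gcongr
    _ = S₂ * (S₁ ^ 2 * S₄) := by ring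

theorem sum_norm_sq_sum_mul_eq {𝕜 α κ : Type*} [RCLike 𝕜] [Fintype α] [Fintype κ] [DecidableEq κ]
    (v : α → κ → 𝕜) (c : ℝ) (hv : ∀ x y, ∑ a, v a x * conj (v a y) = if x = y then (c : 𝕜) else 0)
    (w : κ → 𝕜) : ∑ a, ‖∑ x, v a x * w x‖ ^ 2 = c * ∑ x, ‖w x‖ ^ 2 := by
  apply RCLike.ofReal_injective (K := 𝕜)
  push_cast
  simp_rw [← RCLike.mul_conj, map_sum, map_mul, sum_mul_sum, mul_sum]
  rw [sum_comm]
  refine sum_congr rfl fun x _ => ?_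
  rw [sum_comm]
  calc ∑ y, ∑ a, v a x * w x * (conj (v a y) * conj (w y))
      = ∑ y, w x * conj (w y) * ∑ a, v a x * conj (v a y) := by
        simp_rw [mul_sum]
        exact sum_congr rfl fun y _ => sum_congr rfl fun a _ => by ring
    _ = c * (w x * conj (w x)) := by simp [hv, mul_comm]

lemma pauliZ_eq_diagonal (d : ℕ) : pauliZ d = diagonal fun k => zeta d ^ k.val := by
  ext j k
  simp [pauliZ, diagonal]

lemma trace_mul_outerProd {ι : Type*} [Fintype ι] (P : Matrix ι ι ℂ) (ψ : ι → ℂ) :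
    (P * outerProd ψ).trace = ∑ x : ι × ι, P x.1 x.2 * (ψ x.2 * conj (ψ x.1)) := by
  simp [trace, mul_apply, outerProd, Fintype.sum_prod_type]

section

variable (d : ℕ) [NeZero d]

lemma zeta_pow_eq_stdAddChar (j : ℕ) :
    zeta d ^ j = ZMod.stdAddChar (j : ZMod d) := by
  rw [ZMod.stdAddChar_apply, ZMod.toCircle_natCast, zeta, ← Complex.exp_nat_mul]
  ring_nf

lemma pauliX_pow_apply (l : ℕ) (j k : ZMod d) :
    (pauliX d ^ l) j k = if j = k + l then 1 else 0 := by
  induction l generalizing j k with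
  | zero => simp [one_apply]
  | succ l ih =>
    rw [pow_succ, mul_apply, sum_eq_single (k + 1)]
    · rw [ih]
      simp [pauliX, add_right_comm, add_assoc]
    · intro i _ hi
      simp [pauliX, hi]
    · simp

lemma pauliX_pow_mul_pauliZ_pow_apply (l m j k : ZMod d) :
    (pauliX d ^ l.val * pauliZ d ^ m.val) j k =
      if j = k + l then ZMod.stdAddChar (m * k) else 0 := by
  rw [pauliZ_eq_diagonal, diagonal_pow, mul_diagonal, pauliX_pow_apply, Pi.pow_apply, ← pow_mul,
    zeta_pow_eq_stdAddChar]
  simp [mul_comm]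

lemma sum_pauliXZ_apply_mul_conj (j k j' k' : ZMod d) :
    ∑ p : ZMod d × ZMod d, (pauliX d ^ p.1.val * pauliZ d ^ p.2.val) j k *
        conj ((pauliX d ^ p.1.val * pauliZ d ^ p.2.val) j' k') =
      if j = j' ∧ k = k' then (d : ℂ) else 0 := by
  have hchar : ∀ m : ZMod d, ZMod.stdAddChar (m * k) * conj (ZMod.stdAddChar (m * k')) =
      ZMod.stdAddChar (m * (k - k')) := fun m => by
    rw [← AddChar.map_neg_eq_conj, ← AddChar.map_add_eq_mul, mul_sub, sub_eq_add_neg]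
  simp only [pauliX_pow_mul_pauliZ_pow_apply, apply_ite conj, map_zero, ite_mul, mul_ite,
    zero_mul, mul_zero, hchar, Fintype.sum_prod_type]
  simp_rw [← ite_and, sum_ite_irrel, sum_const_zero,
    AddChar.sum_mulShift _ (ZMod.isPrimitive_stdAddChar d)]
  by_cases hk : k = k'
  · subst hk
    rw [sum_eq_single (j - k)]
    · simp [eq_comm]
    · intro l _ hl
      grind
    · simp
  · simp [sub_eq_zero, hk]

lemma sum_pauliString_apply_mul_conj (n : ℕ) (f g f' g' : Fin n → ZMod d) :
    ∑ a, pauliString d n a f g * conj (pauliString d n a f' g') =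
      if (f, g) = (f', g') then (d : ℂ) ^ n else 0 := by
  simp only [pauliString, of_apply, map_prod, ← prod_mul_distrib]
  rw [← Fintype.prod_sum fun i (p : ZMod d × ZMod d) =>
    (pauliX d ^ p.1.val * pauliZ d ^ p.2.val) (f i) (g i) *
      conj ((pauliX d ^ p.1.val * pauliZ d ^ p.2.val) (f' i) (g' i))]
  simp only [sum_pauliXZ_apply_mul_conj, Fintype.prod_ite_zero, prod_const, card_fin]
  simp [funext_iff, forall_and]

theorem sum_norm_trace_pauliString_mul_outerProd_sq (n : ℕ) (ψ : (Fin n → ZMod d) → ℂ)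
    (hψ : ∑ f, ‖ψ f‖ ^ 2 = 1) :
    ∑ a, ‖(pauliString d n a * outerProd ψ).trace‖ ^ 2 = (d : ℝ) ^ n := by
  simp only [trace_mul_outerProd]
  rw [sum_norm_sq_sum_mul_eq (fun a (x : (Fin n → ZMod d) × (Fin n → ZMod d)) =>
      pauliString d n a x.1 x.2) ((d : ℝ) ^ n)
    (fun x y => by push_cast; exact sum_pauliString_apply_mul_conj d n _ _ _ _)
    fun x => ψ x.2 * conj (ψ x.1)]
  simp [Fintype.sum_prod_type, mul_pow, ← sum_mul, hψ]

end

theorem magic_sq_mul_fourth_moment_ge_general (d n : ℕ) [NeZero d]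
    (ψ : (Fin n → ZMod d) → ℂ) (hψ : ∑ f, ‖ψ f‖ ^ 2 = 1) :
    (((d : ℝ) ^ n)⁻¹ * ∑ a : Fin n → ZMod d × ZMod d,
        ‖(pauliString d n a * outerProd ψ).trace‖) ^ 2 *
      (∑ a : Fin n → ZMod d × ZMod d,
        ‖(pauliString d n a * outerProd ψ).trace‖ ^ 4) ≥ (d : ℝ) ^ n := by
  have hD : (0 : ℝ) < (d : ℝ) ^ n := pow_pos (Nat.cast_pos.mpr (Nat.pos_of_neZero d)) n
  have holder := sum_sq_pow_three_le_sq_sum_mul_sum_pow_four univ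
    (f := fun a => ‖(pauliString d n a * outerProd ψ).trace‖) fun a _ => norm_nonneg _
  rw [sum_norm_trace_pauliString_mul_outerProd_sq d n ψ hψ] at holder
  rw [ge_iff_le, mul_pow, inv_pow, mul_assoc, le_inv_mul_iff₀ (pow_pos hD 2)]
  exact le_of_eq_of_le (by ring) holder

/-- For every integer `d ≥ 2`, every `n ≥ 1` and every unit vector
`ψ ∈ ℂ^{d^n}`, the L₁-norm magic `M(ψ) = d^{−n} Σ_a |tr(P_a ψψ†)|` satisfies
`M(ψ)² · (Σ_a |tr(P_a ψψ†)|⁴) ≥ dⁿ`, the sums over all `d^{2n}` Pauli strings `a`. -/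
theorem magic_sq_mul_fourth_moment_ge (d n : ℕ) [NeZero d] (hd : 2 ≤ d) (hn : 1 ≤ n)
    (ψ : (Fin n → ZMod d) → ℂ) (hψ : ∑ f, ‖ψ f‖ ^ 2 = 1) :
    (((d : ℝ) ^ n)⁻¹ * ∑ a : Fin n → ZMod d × ZMod d,
        ‖(pauliString d n a * outerProd ψ).trace‖) ^ 2 *
      (∑ a : Fin n → ZMod d × ZMod d,
        ‖(pauliString d n a * outerProd ψ).trace‖ ^ 4) ≥ (d : ℝ) ^ n :=
  magic_sq_mul_fourth_moment_ge_general d n ψ hψ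
end

section
/- Let t ≥ 1 and q ≥ 1 be natural numbers, let σ be a permutation of Fin t, and let O be a q×q complex matrix. Then Σ_{f : Fin t → Fin q} ∏_{i ∈ Fin t} O (f i) (f (σ i)) = (tr O)^{f₀} · ∏_{ℓ ∈ cycleType(σ)} tr(O^ℓ), where f₀ is the number of fixed points of σ and the product runs over the multiset of nontrivial cycle lengths of σ. (Equivalently: the trace of the composition of the permutation operator of σ with O^{⊗t} on (ℂ^q)^{⊗t} is the product over the orbits of σ of tr(O^{orbit length}).) -/
/-!
The sum `∑ f, ∏ i, O (f i) (f (σ i))` factors along any splitting of the index set into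
`σ`-invariant pieces, so it is the product of its values on the cycles of `σ`, fixed points
included. It depends only on the cycle type of `σ`, hence on a cycle of length `ℓ` it may be
computed for `finRotate ℓ`, where it is the sum over closed walks of length `ℓ`, i.e. `tr (O ^ ℓ)`.
-/

open Finset Equiv Equiv.Perm

namespace Equiv.Perm

variable {α β : Type*} [Fintype α] [DecidableEq α] [Fintype β] [DecidableEq β]

theorem cycleType_permCongr (e : α ≃ β) (σ : Perm α) :
    (e.permCongr σ).cycleType = σ.cycleType := by
  have : e.permCongr σ = σ.extendDomain (e.trans (subtypeUnivEquiv fun _ => trivial).symm) := by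
    ext x
    simp [extendDomain_apply_subtype, permCongr_apply]
  rw [this, cycleType_extendDomain]

theorem cycleType_eq_add_of_invariant (σ : Perm α) {p : α → Prop} [DecidablePred p]
    [Fintype {x // p x}] [Fintype {x // ¬p x}] (hp : ∀ x, p (σ x) ↔ p x) :
    σ.cycleType = (σ.subtypePerm hp).cycleType +
      (σ.subtypePerm (p := (¬p ·)) fun x => (hp x).not).cycleType := by
  have hσ : σ = ofSubtype (σ.subtypePerm hp) *
      ofSubtype (σ.subtypePerm (p := (¬p ·)) fun x => (hp x).not) := by
    ext x
    by_cases hx : p x <;> simp [ofSubtype_apply_of_mem, ofSubtype_apply_of_not_mem, hx, hp]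
  have hdisj : Disjoint (ofSubtype (σ.subtypePerm hp))
      (ofSubtype (σ.subtypePerm (p := (¬p ·)) fun x => (hp x).not)) := fun x => by
    by_cases hx : p x
    · exact .inr (ofSubtype_apply_of_not_mem _ (not_not_intro hx))
    · exact .inl (ofSubtype_apply_of_not_mem _ hx)
  conv_lhs => rw [hσ]
  rw [hdisj.cycleType_mul, cycleType_ofSubtype, cycleType_ofSubtype]

theorem cycleType_subtypePerm_on_cycleFactorsFinset {σ c : Perm α}
    [Fintype {x // x ∈ c.support}] (hc : c ∈ σ.cycleFactorsFinset) :
    (σ.subtypePerm (mem_cycleFactorsFinset_support hc)).cycleType = {#c.support} := by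
  obtain rfl : ‹Fintype {x // x ∈ c.support}› = Finset.Subtype.fintype c.support :=
    Subsingleton.elim _ _
  rw [subtypePerm_on_cycleFactorsFinset hc, subtypePermOfSupport, ← cycleType_ofSubtype,
    ofSubtype_subtypePerm _ fun _ => mem_support.2, (mem_cycleFactorsFinset_iff.1 hc).1.cycleType]

theorem card_filter_apply_eq_self (σ : Perm α) :
    #{x | σ x = x} = Fintype.card α - σ.cycleType.sum := by
  rw [sum_cycleType, ← card_compl]
  congr
  ext
  simp

end Equiv.Perm

namespace Matrix

variable {n R : Type*} [Fintype n] [CommSemiring R]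
  {α β : Type*} [Fintype α] [DecidableEq α] [Fintype β] [DecidableEq β] (O : Matrix n n R)

/-- The trace of the permutation operator of `σ` composed with `O^{⊗α}` on `(R^n)^{⊗α}`,
written out in the standard basis. -/
def permTrace (σ : Perm α) : R :=
  ∑ f : α → n, ∏ i, O (f i) (f (σ i))

theorem permTrace_permCongr (e : α ≃ β) (σ : Perm α) :
    permTrace O (e.permCongr σ) = permTrace O σ := by
  refine (Fintype.sum_equiv (e.arrowCongr (Equiv.refl n)) _ _ fun f => ?_).symm
  exact Fintype.prod_equiv e _ _ fun a => by simp [permCongr_apply]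

theorem permTrace_sumCongr (σ : Perm α) (τ : Perm β) :
    permTrace O (σ.sumCongr τ) = permTrace O σ * permTrace O τ := by
  rw [permTrace, permTrace, permTrace, Fintype.sum_mul_sum, ← Fintype.sum_prod_type']
  exact Fintype.sum_equiv (sumArrowEquivProdArrow α β n) _ _ fun f => by
    simp [Fintype.prod_sum_type]

theorem permTrace_eq_mul_of_invariant (σ : Perm α) {p : α → Prop} [DecidablePred p]
    [Fintype {x // p x}] [Fintype {x // ¬p x}] (hp : ∀ x, p (σ x) ↔ p x) :
    permTrace O σ = permTrace O (σ.subtypePerm hp) *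
      permTrace O (σ.subtypePerm (p := (¬p ·)) fun x => (hp x).not) := by
  have hσ : σ = (σ.subtypePerm hp).subtypeCongr
      (σ.subtypePerm (p := (¬p ·)) fun x => (hp x).not) := by
    ext x
    by_cases hx : p x <;> simp [hx]
  rw [← permTrace_sumCongr, ← permTrace_permCongr O (sumCompl p), ← Perm.subtypeCongr, ← hσ]

theorem permTrace_one : permTrace O (1 : Perm α) = O.trace ^ Fintype.card α := by
  rw [permTrace, trace, ← card_univ, ← prod_const, Fintype.prod_sum]
  rfl

theorem permTrace_eq_of_cycleType_eq {σ : Perm α} {τ : Perm β}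
    (hcard : Fintype.card α = Fintype.card β) (hστ : σ.cycleType = τ.cycleType) :
    permTrace O σ = permTrace O τ := by
  set e := Fintype.equivOfCardEq hcard
  obtain ⟨π, hπ⟩ := isConj_iff.1 <| isConj_iff_cycleType_eq.2 <|
    (cycleType_permCongr e σ).trans hστ
  rw [← hπ, ← permTrace_permCongr O e σ]
  exact (permTrace_permCongr O π _).symm

variable [DecidableEq n]

theorem pow_succ_apply_eq_sum (m : ℕ) (x y : n) :
    (O ^ (m + 1)) x y = ∑ g : Fin m → n,
      ∏ k, O ((Fin.cons x g : Fin (m + 1) → n) k) ((Fin.snoc g y : Fin (m + 1) → n) k) := by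
  induction m generalizing x with
  | zero => simp [Fin.snoc]
  | succ m ih =>
    rw [pow_succ', mul_apply, ← (Fin.consEquiv fun _ => n).sum_comp, Fintype.sum_prod_type]
    refine sum_congr rfl fun z _ => ?_
    rw [ih, mul_sum]
    refine sum_congr rfl fun g _ => ?_
    simp [Fin.consEquiv, ← Fin.cons_snoc_eq_snoc_cons, Fin.prod_univ_succ]

theorem permTrace_finRotate (m : ℕ) :
    permTrace O (finRotate (m + 1)) = (O ^ (m + 1)).trace := by
  simp_rw [trace, diag, pow_succ_apply_eq_sum, Fin.snoc_eq_cons_rotate]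
  rw [permTrace, ← (Fin.consEquiv fun _ => n).sum_comp, Fintype.sum_prod_type]
  rfl

theorem permTrace_of_cycleType_eq_singleton {ρ : Perm β}
    (hρ : ρ.cycleType = {Fintype.card β}) :
    permTrace O ρ = (O ^ Fintype.card β).trace := by
  obtain ⟨m, hm⟩ : ∃ m, Fintype.card β = m + 2 :=
    ⟨_, (Nat.sub_add_cancel (two_le_of_mem_cycleType (hρ ▸ Multiset.mem_singleton_self _))).symm⟩
  have hrot : ρ.cycleType = (finRotate (m + 2)).cycleType := by
    rw [hρ, hm, cycleType_finRotate]
  rw [permTrace_eq_of_cycleType_eq O ((Fintype.card_fin _).trans hm.symm).symm hrot, hm,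
    permTrace_finRotate]

theorem permTrace_eq_trace_pow_mul_prod_cycleType (σ : Perm α) :
    permTrace O σ = O.trace ^ (Fintype.card α - σ.cycleType.sum) *
      (σ.cycleType.map fun ℓ => (O ^ ℓ).trace).prod := by
  induction hN : Fintype.card α using Nat.strong_induction_on generalizing α with
  | _ N ih =>
  subst hN
  rcases eq_or_ne σ 1 with rfl | hσ
  · simp [permTrace_one]
  obtain ⟨c, hc⟩ := nonempty_iff_ne_empty.2 (cycleFactorsFinset_eq_empty_iff.not.2 hσ)
  have hp := mem_cycleFactorsFinset_support hc
  have hcycle := cycleType_subtypePerm_on_cycleFactorsFinset hc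
  obtain ⟨x, hx⟩ := (mem_cycleFactorsFinset_iff.1 hc).1.nonempty_support
  have hlt : Fintype.card {x // x ∉ c.support} < Fintype.card α :=
    Fintype.card_subtype_lt (not_not_intro hx)
  have hcard := Fintype.card_subtype_compl (· ∈ c.support)
  rw [Fintype.card_coe] at hcard
  rw [permTrace_eq_mul_of_invariant O σ hp, cycleType_eq_add_of_invariant σ hp, ih _ hlt _ rfl,
    permTrace_of_cycleType_eq_singleton O (by rw [hcycle, Fintype.card_coe]), hcycle,
    Fintype.card_coe, hcard, Multiset.sum_add, Multiset.sum_singleton, Nat.sub_sub,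
    Multiset.map_add, Multiset.prod_add, Multiset.map_singleton, Multiset.prod_singleton]
  ring

end Matrix

theorem trace_perm_tensor_pow_general (t q : ℕ)
    (σ : Equiv.Perm (Fin t)) (O : Matrix (Fin q) (Fin q) ℂ) :
    ∑ f : Fin t → Fin q, ∏ i, O (f i) (f (σ i)) =
      O.trace ^ ((Finset.univ.filter fun i => σ i = i).card) *
        (σ.cycleType.map fun ℓ => (O ^ ℓ).trace).prod := by
  rw [Equiv.Perm.card_filter_apply_eq_self]
  exact O.permTrace_eq_trace_pow_mul_prod_cycleType σ

/-- For `t ≥ 1`, `q ≥ 1`, a permutation `σ` of `Fin t` and a `q×q`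
complex matrix `O`, `Σ_{f : Fin t → Fin q} ∏_i O (f i) (f (σ i))
  = (tr O)^{f₀} · ∏_{ℓ ∈ cycleType σ} tr(O^ℓ)`,
where `f₀` is the number of fixed points of `σ` and the product runs over the multiset
of nontrivial cycle lengths of `σ`.  (This is the trace of the permutation operator of
`σ` composed with `O^{⊗t}` on `(ℂ^q)^{⊗t}`.) -/
theorem trace_perm_tensor_pow (t q : ℕ) (ht : 1 ≤ t) (hq : 1 ≤ q)
    (σ : Equiv.Perm (Fin t)) (O : Matrix (Fin q) (Fin q) ℂ) :
    ∑ f : Fin t → Fin q, ∏ i, O (f i) (f (σ i)) =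
      O.trace ^ ((Finset.univ.filter fun i => σ i = i).card) *
        (σ.cycleType.map fun ℓ => (O ^ ℓ).trace).prod :=
  trace_perm_tensor_pow_general t q σ O
end

section
/- For all natural numbers l, m and all t ≥ 1: if d divides l·t and d divides m·t then |tr((X^l Z^m)^t)| = d, and otherwise tr((X^l Z^m)^t) = 0. -/
/-!
Both `X` and `Z` are weighted shifts `k ↦ f k • e_(k + a)` over `ZMod d`, and weighted shifts
form a monoid: `(X^l Z^m)^t` is the shift by `t l` with weight
`k ↦ ∏_{i<t} ψ(k + i l)^m`, where `ψ j = ζ^j` is the standard additive character. Its trace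
vanishes unless `d ∣ l t`, and then equals a unimodular constant times the character sum
`∑_k ψ(k)^(m t)`, which is `d` or `0` according as `d ∣ m t` or not.
-/

open Finset

namespace Matrix

variable {G R : Type*} [AddCommGroup G] [DecidableEq G] [CommSemiring R]

def weightedShift (a : G) (f : G → R) : Matrix G G R :=
  of fun j k => if j = k + a then f k else 0

theorem weightedShift_zero_one : weightedShift (0 : G) (fun _ => (1 : R)) = 1 := by
  ext j k
  simp [weightedShift, one_apply]

variable [Fintype G]

theorem weightedShift_mul (a b : G) (f g : G → R) :
    weightedShift a f * weightedShift b g = weightedShift (a + b) fun k => f (k + b) * g k := by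
  ext j k
  rw [mul_apply, Finset.sum_eq_single (k + b)]
  · by_cases h : j = k + (a + b) <;> simp [weightedShift, h, add_assoc, add_comm b a]
  · intro i _ hi
    simp [weightedShift, hi]
  · simp

theorem weightedShift_pow (a : G) (f : G → R) (t : ℕ) :
    weightedShift a f ^ t = weightedShift (t • a) fun k => ∏ i ∈ range t, f (k + i • a) := by
  induction t with
  | zero => simp [weightedShift_zero_one]
  | succ n ih =>
    rw [pow_succ, ih, weightedShift_mul, succ_nsmul]
    congr 1
    funext k
    rw [prod_range_succ']
    simp only [succ_nsmul, zero_smul, add_zero, add_assoc, add_comm a]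

theorem trace_weightedShift (a : G) (f : G → R) :
    (weightedShift a f).trace = if a = 0 then ∑ k, f k else 0 := by
  by_cases ha : a = 0 <;> simp [trace, weightedShift, ha]

end Matrix

namespace AddChar

variable {G R : Type*} [AddCommGroup G] [CommMonoid R]

theorem prod_range_apply_add (ψ : AddChar G R) (k a : G) (t : ℕ) :
    ∏ i ∈ range t, ψ (k + i • a) = ψ k ^ t * ∏ i ∈ range t, ψ (i • a) := by
  simp only [map_add_eq_mul, prod_mul_distrib, prod_const, card_range]

end AddChar

open Matrix AddChar

variable {d : ℕ}

theorem pauliX_eq_weightedShift : pauliX d = weightedShift 1 fun _ => 1 := rfl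

variable [NeZero d]

theorem zeta_pow_val (j : ZMod d) : zeta d ^ j.val = ZMod.stdAddChar j := by
  rw [ZMod.stdAddChar_apply, ZMod.toCircle_apply, zeta, ← Complex.exp_nat_mul]
  ring_nf

namespace ZMod

theorem stdAddChar_pow_eq_one_iff (N : ℕ) :
    (ZMod.stdAddChar : AddChar (ZMod d) ℂ) ^ N = 1 ↔ d ∣ N := by
  rw [← ZMod.natCast_eq_zero_iff, eq_one_iff]
  constructor
  · intro h
    have h1 := (h (1 : ZMod d)).trans (map_zero_eq_one (ZMod.stdAddChar (N := d))).symm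
    rwa [pow_apply, ← map_nsmul_eq_pow, ZMod.injective_stdAddChar.eq_iff, nsmul_eq_mul,
      mul_one] at h1
  · intro h x
    rw [pow_apply, ← map_nsmul_eq_pow, nsmul_eq_mul, h, zero_mul, map_zero_eq_one]

theorem sum_stdAddChar_pow (N : ℕ) :
    ∑ k : ZMod d, ZMod.stdAddChar k ^ N = if d ∣ N then (d : ℂ) else 0 := by
  classical
  have := sum_eq_ite ((ZMod.stdAddChar : AddChar (ZMod d) ℂ) ^ N)
  simp only [pow_apply] at this
  rw [this, ZMod.card]
  exact if_congr (stdAddChar_pow_eq_one_iff N) rfl rfl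

end ZMod

theorem pauliZ_eq_weightedShift : pauliZ d = weightedShift 0 fun k => ZMod.stdAddChar k := by
  ext j k
  by_cases h : j = k <;> simp [pauliZ, weightedShift, h, zeta_pow_val]

theorem pauliX_pow_mul_pauliZ_pow (l m : ℕ) :
    pauliX d ^ l * pauliZ d ^ m = weightedShift (l : ZMod d) fun k => ZMod.stdAddChar k ^ m := by
  simp [pauliX_eq_weightedShift, pauliZ_eq_weightedShift, weightedShift_pow, weightedShift_mul]

theorem trace_pauliX_pow_mul_pauliZ_pow_pow (l m t : ℕ) :
    ((pauliX d ^ l * pauliZ d ^ m) ^ t).trace =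
      if d ∣ l * t then
        (∏ i ∈ range t, ZMod.stdAddChar (i • (l : ZMod d))) ^ m *
          if d ∣ m * t then (d : ℂ) else 0
      else 0 := by
  have hshift : t • (l : ZMod d) = ((l * t : ℕ) : ZMod d) := by
    rw [nsmul_eq_mul]; push_cast; ring
  rw [pauliX_pow_mul_pauliZ_pow, weightedShift_pow, trace_weightedShift, hshift]
  by_cases hl : d ∣ l * t
  · rw [if_pos ((ZMod.natCast_eq_zero_iff _ _).2 hl), if_pos hl, ← ZMod.sum_stdAddChar_pow, mul_sum]
    refine sum_congr rfl fun k _ => ?_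
    rw [prod_pow, prod_range_apply_add, mul_pow, ← pow_mul, mul_comm, mul_comm t]
  · rw [if_neg (mt (ZMod.natCast_eq_zero_iff _ _).1 hl), if_neg hl]

theorem trace_pauli_pow_general (d : ℕ) [NeZero d] (l m t : ℕ) :
    (d ∣ l * t ∧ d ∣ m * t →
        ‖((pauliX d ^ l * pauliZ d ^ m) ^ t).trace‖ = d) ∧
    (¬(d ∣ l * t ∧ d ∣ m * t) →
        ((pauliX d ^ l * pauliZ d ^ m) ^ t).trace = 0) := by
  rw [trace_pauliX_pow_mul_pauliZ_pow_pow]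
  refine ⟨fun ⟨hl, hm⟩ => ?_, fun h => ?_⟩
  · simp [hl, hm, norm_prod]
  · by_cases hl : d ∣ l * t
    · rw [if_pos hl, if_neg fun hm => h ⟨hl, hm⟩, mul_zero]
    · rw [if_neg hl]

/-- For all `l, m` and `t ≥ 1`: if `d ∣ l·t` and `d ∣ m·t` then
`|tr((X^l Z^m)^t)| = d`, and otherwise `tr((X^l Z^m)^t) = 0`. -/
theorem trace_pauli_pow (d : ℕ) [NeZero d] (hd : 2 ≤ d) (l m t : ℕ) (ht : 1 ≤ t) :
    (d ∣ l * t ∧ d ∣ m * t →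
        ‖((pauliX d ^ l * pauliZ d ^ m) ^ t).trace‖ = d) ∧
    (¬(d ∣ l * t ∧ d ∣ m * t) →
        ((pauliX d ^ l * pauliZ d ^ m) ^ t).trace = 0) :=
  trace_pauli_pow_general d l m t
end

section
/- Let d = 2k where k ≥ 1 is odd. For all natural numbers l, m with 0 ≤ l, m < d and (l, m) ≠ (0, 0), set O = X^l Z^m. If (l, m) ∈ {(k, 0), (0, k), (k, k)} then (tr O²)² = d² and tr O⁴ = d; otherwise tr O² = 0 and tr O⁴ = 0. -/
section aux
variable (d : ℕ) [NeZero d]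

lemma zeta_primitive : IsPrimitiveRoot (zeta d) d :=
  Complex.isPrimitiveRoot_exp d (NeZero.ne d)

lemma zeta_pow_self : zeta d ^ d = 1 := (zeta_primitive d).pow_eq_one

lemma zeta_pow_dvd {a : ℕ} (h : d ∣ a) : zeta d ^ a = 1 := by
  obtain ⟨c, rfl⟩ := h
  rw [pow_mul, zeta_pow_self, one_pow]

lemma zeta_pow_eq_one_iff {a : ℕ} : zeta d ^ a = 1 ↔ d ∣ a :=
  (zeta_primitive d).pow_eq_one_iff_dvd a

noncomputable def pmat (a b : ℕ) : Matrix (ZMod d) (ZMod d) ℂ :=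
  Matrix.of fun j k : ZMod d => if j = k + (a : ZMod d) then zeta d ^ (b * k.val) else 0

lemma zeta_pow_val_s11 (b : ℕ) (u : ZMod d) (n : ℕ) (h : (n : ZMod d) = u) :
    zeta d ^ (b * u.val) = zeta d ^ (b * n) := by
  subst h
  rw [ZMod.val_natCast]
  have hsplit : b * n = b * (n % d) + d * (b * (n / d)) := by
    conv_lhs => rw [← Nat.mod_add_div n d]
    ring
  rw [hsplit, pow_add, zeta_pow_dvd d ⟨_, rfl⟩, mul_one]

lemma pmat_mul (a b c e : ℕ) :
    pmat d a b * pmat d c e = zeta d ^ (b * c) • pmat d (a + c) (b + e) := by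
  ext j i
  simp only [Matrix.mul_apply, pmat, Matrix.of_apply, Matrix.smul_apply, smul_eq_mul]
  rw [Finset.sum_eq_single (i + (c : ZMod d))]
  · rw [if_pos rfl]
    have hval : zeta d ^ (b * (i + (c : ZMod d)).val) = zeta d ^ (b * (i.val + c)) := by
      apply zeta_pow_val_s11
      push_cast
      rw [ZMod.natCast_val, ZMod.cast_id]
    by_cases hj : j = i + ((a : ZMod d) + (c : ZMod d))
    · rw [if_pos (hj.trans (by ring)), if_pos (hj.trans (by push_cast; ring)), hval,
        ← pow_add, ← pow_add]
      congr 1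
      ring
    · rw [if_neg (fun h => hj (h.trans (by ring))),
        if_neg (fun h => hj (h.trans (by push_cast; ring)))]
      ring
  · intro x _ hx
    rw [if_neg hx, mul_zero]
  · intro h
    exact absurd (Finset.mem_univ _) h

omit [NeZero d] in
lemma pmat_zero : pmat d 0 0 = 1 := by
  ext j i
  simp [pmat, Matrix.one_apply, eq_comm]

lemma pauliX_pow (l : ℕ) : pauliX d ^ l = pmat d l 0 := by
  induction l with
  | zero => simpa using (pmat_zero d).symm
  | succ n ih =>
    have hX : pauliX d = pmat d 1 0 := by
      ext j i
      simp [pauliX, pmat]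
    rw [pow_succ, ih, hX, pmat_mul]
    simp

lemma pauliZ_pow (m : ℕ) : pauliZ d ^ m = pmat d 0 m := by
  induction m with
  | zero => simpa using (pmat_zero d).symm
  | succ n ih =>
    have hZ : pauliZ d = pmat d 0 1 := by
      ext j i
      simp only [pauliZ, pmat, Matrix.of_apply, Nat.cast_zero, add_zero, one_mul]
      by_cases h : j = i
      · subst h; simp
      · simp [h]
    rw [pow_succ, ih, hZ, pmat_mul]
    simp [add_comm]

lemma sum_zeta_pow (b : ℕ) :
    (∑ j : ZMod d, zeta d ^ (b * j.val)) = if d ∣ b then (d : ℂ) else 0 := by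
  have hrw : (∑ j : ZMod d, zeta d ^ (b * j.val)) = ∑ i ∈ Finset.range d, (zeta d ^ b) ^ i := by
    apply Finset.sum_nbij' (fun j : ZMod d => j.val) (fun i : ℕ => (i : ZMod d))
    · intro j _; exact Finset.mem_range.mpr (ZMod.val_lt j)
    · intro i _; exact Finset.mem_univ _
    · intro j _; rw [ZMod.natCast_val, ZMod.cast_id]
    · intro i hi; exact ZMod.val_natCast_of_lt (Finset.mem_range.mp hi)
    · intro j _; rw [pow_mul]
  rw [hrw]
  by_cases h : d ∣ b
  · rw [if_pos h, zeta_pow_dvd d h]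
    simp
  · rw [if_neg h]
    have hne : zeta d ^ b ≠ 1 := fun hc => h ((zeta_pow_eq_one_iff d).mp hc)
    have hgs := geom_sum_mul (zeta d ^ b) d
    rw [← pow_mul, mul_comm b d, pow_mul, zeta_pow_self, one_pow, sub_self] at hgs
    exact (mul_eq_zero.mp hgs).resolve_right (sub_ne_zero.mpr hne)

lemma pmat_trace (a b : ℕ) :
    (pmat d a b).trace = if d ∣ a ∧ d ∣ b then (d : ℂ) else 0 := by
  unfold Matrix.trace Matrix.diag pmat
  simp only [Matrix.of_apply]
  by_cases ha : d ∣ a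
  · have ha0 : (a : ZMod d) = 0 := (ZMod.natCast_eq_zero_iff a d).mpr ha
    simp only [ha0, add_zero, if_true]
    rw [sum_zeta_pow]
    by_cases hb : d ∣ b
    · simp [ha, hb]
    · simp [ha, hb]
  · have ha0 : (a : ZMod d) ≠ 0 := fun hc => ha ((ZMod.natCast_eq_zero_iff a d).mp hc)
    simp [left_eq_add, ha0, ha]

end aux

lemma dvd_four_cases (d k l : ℕ) (hd : d = 2 * k) (hodd : Odd k) (hl : l < d)
    (h : d ∣ 4 * l) : l = 0 ∨ l = k := by
  obtain ⟨t, ht⟩ := h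
  have h2 : 2 * l = k * t := by
    have h4 : 4 * l = 2 * (k * t) := by rw [ht, hd]; ring
    omega
  have hk2 : k ∣ l * 2 := ⟨t, by omega⟩
  have hkl : k ∣ l := (Nat.Coprime.dvd_of_dvd_mul_right hodd.coprime_two_right) hk2
  obtain ⟨s, rfl⟩ := hkl
  have hkpos : 0 < k := by
    rcases Nat.eq_zero_or_pos k with h0 | h0
    · omega
    · exact h0
  have hs : s < 2 := by
    by_contra hs
    push_neg at hs
    have : 2 * k ≤ k * s := by nlinarith
    omega
  interval_cases s
  · omega
  · omega

/-- Let `d = 2k` with `k ≥ 1` odd. For `0 ≤ l, m < d` with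
`(l, m) ≠ (0, 0)` and `O = X^l Z^m`: if `(l, m) ∈ {(k,0), (0,k), (k,k)}` then
`(tr O²)² = d²` and `tr O⁴ = d`; otherwise `tr O² = 0` and `tr O⁴ = 0`. -/
theorem trace_sq_fourth_of_two_mul_odd (d k : ℕ) [NeZero d] (hd : d = 2 * k)
    (hk : 1 ≤ k) (hodd : Odd k) (l m : ℕ) (hl : l < d) (hm : m < d)
    (hne : (l, m) ≠ (0, 0)) :
    (((l, m) = (k, 0) ∨ (l, m) = (0, k) ∨ (l, m) = (k, k)) →
        (((pauliX d ^ l * pauliZ d ^ m) ^ 2).trace ^ 2 = (d : ℂ) ^ 2 ∧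
         ((pauliX d ^ l * pauliZ d ^ m) ^ 4).trace = (d : ℂ))) ∧
    (¬((l, m) = (k, 0) ∨ (l, m) = (0, k) ∨ (l, m) = (k, k)) →
        (((pauliX d ^ l * pauliZ d ^ m) ^ 2).trace = 0 ∧
         ((pauliX d ^ l * pauliZ d ^ m) ^ 4).trace = 0)) := by
  have hO : pauliX d ^ l * pauliZ d ^ m = pmat d l m := by
    rw [pauliX_pow, pauliZ_pow, pmat_mul]
    simp
  have h2 : (pmat d l m) ^ 2 = zeta d ^ (m * l) • pmat d (2 * l) (2 * m) := by
    rw [sq, pmat_mul]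
    congr 2 <;> ring
  have h4 : (pmat d l m) ^ 4 = zeta d ^ (6 * (m * l)) • pmat d (4 * l) (4 * m) := by
    rw [show (pmat d l m) ^ 4 = ((pmat d l m) ^ 2) ^ 2 from by rw [← pow_mul], h2, smul_pow,
      sq (pmat d (2 * l) (2 * m)), pmat_mul, smul_smul, ← pow_mul, ← pow_add]
    congr 2 <;> ring
  have tr2 : ((pauliX d ^ l * pauliZ d ^ m) ^ 2).trace
      = zeta d ^ (m * l) * (if d ∣ 2 * l ∧ d ∣ 2 * m then (d : ℂ) else 0) := by
    rw [hO, h2, Matrix.trace_smul, pmat_trace, smul_eq_mul]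
  have tr4 : ((pauliX d ^ l * pauliZ d ^ m) ^ 4).trace
      = zeta d ^ (6 * (m * l)) * (if d ∣ 4 * l ∧ d ∣ 4 * m then (d : ℂ) else 0) := by
    rw [hO, h4, Matrix.trace_smul, pmat_trace, smul_eq_mul]
  constructor
  · rintro (h | h | h) <;> rw [Prod.mk.injEq] at h <;> obtain ⟨h1, h2⟩ := h <;>
      rw [h1, h2] at tr2 tr4 ⊢
    · constructor
      · rw [tr2, if_pos ⟨⟨1, by omega⟩, ⟨0, by omega⟩⟩]
        norm_num
      · rw [tr4, if_pos ⟨⟨2, by omega⟩, ⟨0, by omega⟩⟩]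
        norm_num
    · constructor
      · rw [tr2, if_pos ⟨⟨0, by omega⟩, ⟨1, by omega⟩⟩]
        norm_num
      · rw [tr4, if_pos ⟨⟨0, by omega⟩, ⟨2, by omega⟩⟩]
        norm_num
    · constructor
      · rw [tr2, if_pos ⟨⟨1, by omega⟩, ⟨1, by omega⟩⟩, mul_pow, ← pow_mul,
          zeta_pow_dvd d (show d ∣ k * k * 2 from ⟨k, by rw [hd]; ring⟩), one_mul]
      · rw [tr4, if_pos ⟨⟨2, by omega⟩, ⟨2, by omega⟩⟩,
          zeta_pow_dvd d (show d ∣ 6 * (k * k) from ⟨3 * k, by rw [hd]; ring⟩), one_mul]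
  · intro h
    have hnot4 : ¬(d ∣ 4 * l ∧ d ∣ 4 * m) := by
      rintro ⟨h1, h2⟩
      have hlc := dvd_four_cases d k l hd hodd hl h1
      have hmc := dvd_four_cases d k m hd hodd hm h2
      push_neg at h
      simp only [Prod.mk.injEq, ne_eq] at h hne
      rcases hlc with rfl | rfl <;> rcases hmc with rfl | rfl <;> tauto
    have hnot2 : ¬(d ∣ 2 * l ∧ d ∣ 2 * m) := by
      rintro ⟨h1, h2⟩
      refine hnot4 ⟨?_, ?_⟩
      · have := h1.mul_left 2
        rwa [show 2 * (2 * l) = 4 * l from by ring] at this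
      · have := h2.mul_left 2
        rwa [show 2 * (2 * m) = 4 * m from by ring] at this
    constructor
    · rw [tr2, if_neg hnot2, mul_zero]
    · rw [tr4, if_neg hnot4, mul_zero]
end

section
/- For all integers d ≥ 2 and B ≥ 2, the real numbers B²d² − 1, B²d² − 2 and B²d² − 3 are positive and 0 ≤ (B⁶d³ + 5B⁴d³ − 20B⁴d² + B⁴d − 16B²d² + 65B²d − 36) / ((B²d² − 3)(B²d² − 2)(B²d² − 1)) ≤ 3/d³. (This rational expression is the spectral radius of the O₂ interaction block of the 24-component statistical model.) -/
lemma aux_N (b e : ℝ) (hb : 2 ≤ b) (he : 2 ≤ e) :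
    0 ≤ b ^ 6 * e ^ 3 + 5 * b ^ 4 * e ^ 3 - 20 * b ^ 4 * e ^ 2 + b ^ 4 * e -
      16 * b ^ 2 * e ^ 2 + 65 * b ^ 2 * e - 36 := by
  have hb' : 0 ≤ b - 2 := by linarith
  have he' : 0 ≤ e - 2 := by linarith
  have h : b ^ 6 * e ^ 3 + 5 * b ^ 4 * e ^ 3 - 20 * b ^ 4 * e ^ 2 + b ^ 4 * e -
      16 * b ^ 2 * e ^ 2 + 65 * b ^ 2 * e - 36 = 132 + 468*(e-2)^1 + 480*(e-2)^2 + 144*(e-2)^3 + 584*(b-2)^1 + 1700*(b-2)^1*(e-2)^1 + 1408*(b-2)^1*(e-2)^2 + 352*(b-2)^1*(e-2)^3 + 1074*(b-2)^2 + 2425*(b-2)^2*(e-2)^1 + 1664*(b-2)^2*(e-2)^2 + 360*(b-2)^2*(e-2)^3 + 976*(b-2)^3 + 1768*(b-2)^3*(e-2)^1 + 1040*(b-2)^3*(e-2)^2 + 200*(b-2)^3*(e-2)^3 + 442*(b-2)^4 + 701*(b-2)^4*(e-2)^1 + 370*(b-2)^4*(e-2)^2 + 65*(b-2)^4*(e-2)^3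 + 96*(b-2)^5 + 144*(b-2)^5*(e-2)^1 + 72*(b-2)^5*(e-2)^2 + 12*(b-2)^5*(e-2)^3 + 8*(b-2)^6 + 12*(b-2)^6*(e-2)^1 + 6*(b-2)^6*(e-2)^2 + 1*(b-2)^6*(e-2)^3 := by ring
  rw [h]; positivity

lemma aux_P (b e : ℝ) (hb : 2 ≤ b) (he : 2 ≤ e) :
    0 ≤ 3 * ((b ^ 2 * e ^ 2 - 3) * (b ^ 2 * e ^ 2 - 2) * (b ^ 2 * e ^ 2 - 1)) -
      (b ^ 6 * e ^ 3 + 5 * b ^ 4 * e ^ 3 - 20 * b ^ 4 * e ^ 2 + b ^ 4 * e -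
        16 * b ^ 2 * e ^ 2 + 65 * b ^ 2 * e - 36) * e ^ 3 := by
  have hb' : 0 ≤ b - 2 := by linarith
  have he' : 0 ≤ e - 2 := by linarith
  have h : 3 * ((b ^ 2 * e ^ 2 - 3) * (b ^ 2 * e ^ 2 - 2) * (b ^ 2 * e ^ 2 - 1)) -
      (b ^ 6 * e ^ 3 + 5 * b ^ 4 * e ^ 3 - 20 * b ^ 4 * e ^ 2 + b ^ 4 * e -
        16 * b ^ 2 * e ^ 2 + 65 * b ^ 2 * e - 36) * e ^ 3 = 7134 + 22848*(e-2)^1 + 29052*(e-2)^2 + 18564*(e-2)^3 + 6156*(e-2)^4 + 960*(e-2)^5 + 48*(e-2)^6 + 23504*(b-2)^1 + 72080*(b-2)^1*(e-2)^1 + 89380*(b-2)^1*(e-2)^2 + 57056*(b-2)^1*(e-2)^3 + 19612*(b-2)^1*(e-2)^4 + 3392*(b-2)^1*(e-2)^5 + 224*(b-2)^1*(e-2)^6 + 30708*(b-2)^2 + 92260*(b-2)^2*(e-2)^1 + 113609*(b-2)^2*(e-2)^2 + 73272*(b-2)^2*(e-2)^3 + 26039*(b-2)^2*(e-2)^4 +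 4816*(b-2)^2*(e-2)^5 + 360*(b-2)^2*(e-2)^6 + 20608*(b-2)^3 + 61696*(b-2)^3*(e-2)^1 + 76352*(b-2)^3*(e-2)^2 + 49984*(b-2)^3*(e-2)^3 + 18248*(b-2)^3*(e-2)^4 + 3520*(b-2)^3*(e-2)^5 + 280*(b-2)^3*(e-2)^6 + 7696*(b-2)^4 + 23072*(b-2)^4*(e-2)^1 + 28744*(b-2)^4*(e-2)^2 + 19048*(b-2)^4*(e-2)^3 + 7081*(b-2)^4*(e-2)^4 + 1400*(b-2)^4*(e-2)^5 + 115*(b-2)^4*(e-2)^6 + 1536*(b-2)^5 + 4608*(b-2)^5*(e-2)^1 + 5760*(b-2)^5*(e-2)^2 + 3840*(b-2)^5*(e-2)^3 + 1440*(b-2)^5*(e-2)^4 + 288*(b-2)^5*(e-2)^5 + 24*(b-2)^5*(e-2)^6 + 128*(b-2)^6 + 384*(b-2)^6*(e-2)^1 + 480*(b-2)^6*(e-2)^2 + 320*(b-2)^6*(e-2)^3 + 120*(b-2)^6*(e-2)^4 + 24*(b-2)^6*(e-2)^5 + 2*(b-2)^6*(e-2)^6 := by ring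
  rw [h]; positivity

/-- For all integers `d ≥ 2` and `B ≥ 2`, the real numbers
`B²d² − 1`, `B²d² − 2` and `B²d² − 3` are positive and
`0 ≤ (B⁶d³ + 5B⁴d³ − 20B⁴d² + B⁴d − 16B²d² + 65B²d − 36) /
     ((B²d² − 3)(B²d² − 2)(B²d² − 1)) ≤ 3/d³`.
(This rational expression is the spectral radius of the `O₂` interaction block.) -/
theorem O₂_block_spectral_radius_le (d B : ℤ) (hd : 2 ≤ d) (hB : 2 ≤ B) :
    0 < (B : ℝ) ^ 2 * (d : ℝ) ^ 2 - 1 ∧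
    0 < (B : ℝ) ^ 2 * (d : ℝ) ^ 2 - 2 ∧
    0 < (B : ℝ) ^ 2 * (d : ℝ) ^ 2 - 3 ∧
    0 ≤ ((B : ℝ) ^ 6 * (d : ℝ) ^ 3 + 5 * (B : ℝ) ^ 4 * (d : ℝ) ^ 3 -
          20 * (B : ℝ) ^ 4 * (d : ℝ) ^ 2 + (B : ℝ) ^ 4 * (d : ℝ) -
          16 * (B : ℝ) ^ 2 * (d : ℝ) ^ 2 + 65 * (B : ℝ) ^ 2 * (d : ℝ) - 36) /
        (((B : ℝ) ^ 2 * (d : ℝ) ^ 2 - 3) * ((B : ℝ) ^ 2 * (d : ℝ) ^ 2 - 2) *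
          ((B : ℝ) ^ 2 * (d : ℝ) ^ 2 - 1)) ∧
    ((B : ℝ) ^ 6 * (d : ℝ) ^ 3 + 5 * (B : ℝ) ^ 4 * (d : ℝ) ^ 3 -
          20 * (B : ℝ) ^ 4 * (d : ℝ) ^ 2 + (B : ℝ) ^ 4 * (d : ℝ) -
          16 * (B : ℝ) ^ 2 * (d : ℝ) ^ 2 + 65 * (B : ℝ) ^ 2 * (d : ℝ) - 36) /
        (((B : ℝ) ^ 2 * (d : ℝ) ^ 2 - 3) * ((B : ℝ) ^ 2 * (d : ℝ) ^ 2 - 2) *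
          ((B : ℝ) ^ 2 * (d : ℝ) ^ 2 - 1)) ≤ 3 / (d : ℝ) ^ 3 := by
  have hb : (2:ℝ) ≤ (B:ℝ) := by exact_mod_cast hB
  have he : (2:ℝ) ≤ (d:ℝ) := by exact_mod_cast hd
  have hB2 : (4:ℝ) ≤ (B:ℝ)^2 := by nlinarith
  have hd2 : (4:ℝ) ≤ (d:ℝ)^2 := by nlinarith
  have hx : (16:ℝ) ≤ (B:ℝ)^2 * (d:ℝ)^2 := by
    calc (16:ℝ) = 4 * 4 := by norm_num
    _ ≤ (B:ℝ)^2 * (d:ℝ)^2 := by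
        apply mul_le_mul hB2 hd2 (by norm_num) (by positivity)
  have h1 : 0 < (B : ℝ) ^ 2 * (d : ℝ) ^ 2 - 1 := by linarith
  have h2 : 0 < (B : ℝ) ^ 2 * (d : ℝ) ^ 2 - 2 := by linarith
  have h3 : 0 < (B : ℝ) ^ 2 * (d : ℝ) ^ 2 - 3 := by linarith
  have hD : 0 < ((B : ℝ) ^ 2 * (d : ℝ) ^ 2 - 3) * ((B : ℝ) ^ 2 * (d : ℝ) ^ 2 - 2) *
      ((B : ℝ) ^ 2 * (d : ℝ) ^ 2 - 1) := by positivity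
  have he3 : (0:ℝ) < (d:ℝ)^3 := by positivity
  refine ⟨h1, h2, h3, div_nonneg (aux_N _ _ hb he) hD.le, ?_⟩
  rw [div_le_div_iff₀ hD he3]
  have := aux_P (B:ℝ) (d:ℝ) hb he
  nlinarith [this]
end
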